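/- Let f₀, f₁, …, f_s : ℝ^n → ℝ∪{∞} be proper lsc functions with fᵢ(x̄) < ∞ for some x̄ and inf_x fᵢ(x) ≥ −η for all i, where η ≥ 0. Let p ∈ Δ and define δ(u) = inf_x [ f₀(x) + Σᵢ (pᵢ+uᵢ) fᵢ(x) + ι_Δ(p+u) ]. Then δ(0) ∈ ℝ and there exists κ ≥ 0 such that δ(u) ≥ δ(0) − κ‖u‖₁ for all u with ‖u‖₁ ≤ α/2, where α = min{ pᵢ : pᵢ > 0 }. -/
import Mathlib


open Filter Topology
open scoped Classical

/-- Weighted sum `Σᵢ cᵢ aᵢ` of extended reals `aᵢ ∈ (−∞,∞]` with weights `cᵢ ∈ ℝ`, under the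
conventions `0·∞ = 0` and `∞ − ∞ = ∞`. -/
noncomputable def wsumE {s : ℕ} (c : Fin s → ℝ) (a : Fin s → EReal) : EReal :=
  if ∃ i, c i ≠ 0 ∧ a i = ⊤ then ⊤ else ((∑ i, c i * (a i).toReal : ℝ) : EReal)

lemma wsumE_ne_bot {s : ℕ} (c : Fin s → ℝ) (a : Fin s → EReal) : wsumE c a ≠ ⊥ := by
  unfold wsumE; split <;> simp

lemma wsumE_lb {s : ℕ} (c : Fin s → ℝ) (a : Fin s → EReal) (η : ℝ)
    (hc : ∀ i, 0 ≤ c i) (hc1 : ∑ i, c i = 1)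
    (ha : ∀ i, (((-η : ℝ)) : EReal) ≤ a i) :
    (((-η : ℝ)) : EReal) ≤ wsumE c a := by
  unfold wsumE
  split
  · exact le_top
  · next h =>
    push_neg at h
    rw [EReal.coe_le_coe_iff]
    have : ∀ i ∈ Finset.univ, c i * (-η) ≤ c i * (a i).toReal := by
      intro i _
      by_cases hci : c i = 0
      · simp [hci]
      · have hne : a i ≠ ⊤ := h i hci
        have := EReal.toReal_le_toReal (ha i) (by simp) hne
        exact mul_le_mul_of_nonneg_left (by simpa using this) (hc i)
    calc (-η : ℝ) = ∑ i, c i * (-η) := by rw [← Finset.sum_mul, hc1, one_mul]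
    _ ≤ ∑ i, c i * (a i).toReal := Finset.sum_le_sum this

/-- Calmness of the min-value function
`δ(u) = inf_x [f₀(x) + Σᵢ(pᵢ+uᵢ)fᵢ(x) + ι_Δ(p+u)]`: under properness, lower-boundedness by
`−η` and common finiteness at `x̄`, one has `δ(0) ∈ ℝ` and `δ(u) ≥ δ(0) − κ‖u‖₁` for all `u`
with `‖u‖₁ ≤ α/2`, where `α = min{pᵢ : pᵢ > 0}`. -/
theorem stmt13 {s n : ℕ}
    (f₀ : EuclideanSpace ℝ (Fin n) → EReal)
    (F : Fin s → EuclideanSpace ℝ (Fin n) → EReal)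
    (hf₀bot : ∀ x, f₀ x ≠ ⊥) (hf₀lsc : LowerSemicontinuous f₀)
    (hFbot : ∀ i x, F i x ≠ ⊥) (hFlsc : ∀ i, LowerSemicontinuous (F i))
    (η : ℝ) (hη : 0 ≤ η)
    (xb : EuclideanSpace ℝ (Fin n))
    (hfinb : f₀ xb ≠ ⊤ ∧ ∀ i, F i xb ≠ ⊤)
    (hlb : (∀ x, -((η : ℝ) : EReal) ≤ f₀ x) ∧ ∀ i x, -((η : ℝ) : EReal) ≤ F i x)
    (p : Fin s → ℝ) (hp : (∀ i, 0 ≤ p i) ∧ ∑ i, p i = 1)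
    (α : ℝ) (hα : IsLeast {t : ℝ | ∃ i, 0 < p i ∧ p i = t} α)
    -- the min-value function δ
    (δ : (Fin s → ℝ) → EReal)
    (hδ : ∀ u, δ u =
      if (∀ i, 0 ≤ p i + u i) ∧ ∑ i, (p i + u i) = 1 then
        ⨅ x, f₀ x + wsumE (fun i => p i + u i) (fun i => F i x)
      else ⊤) :
    (δ 0 ≠ ⊤ ∧ δ 0 ≠ ⊥) ∧
    ∃ κ : ℝ, 0 ≤ κ ∧ ∀ u : Fin s → ℝ, (∑ i, |u i|) ≤ α / 2 →
      δ 0 - ((κ * ∑ i, |u i| : ℝ) : EReal) ≤ δ u := by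
  obtain ⟨hlb₀, hlbF⟩ := hlb
  obtain ⟨hpnn, hp1⟩ := hp
  -- α > 0, α ≤ p i for positive p i
  have hαpos : 0 < α := by obtain ⟨i, hi, hie⟩ := hα.1; exact hie ▸ hi
  have hαle : ∀ i, 0 < p i → α ≤ p i := fun i hi => hα.2 ⟨i, hi, rfl⟩
  have hlbE : ∀ x, (((-η : ℝ)) : EReal) ≤ f₀ x := by
    intro x; simpa using hlb₀ x
  have hlbFE : ∀ i x, (((-η : ℝ)) : EReal) ≤ F i x := by
    intro i x; simpa using hlbF i x
  -- δ 0 formula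
  have hpfun : (fun i => p i + (0 : Fin s → ℝ) i) = p := by funext i; simp
  have h0 : δ 0 = ⨅ x, f₀ x + wsumE p (fun i => F i x) := by
    rw [hδ 0, if_pos (by simpa using ⟨hpnn, hp1⟩), hpfun]
  -- lower bound on each term
  have hterm_lb : ∀ (c : Fin s → ℝ), (∀ i, 0 ≤ c i) → (∑ i, c i = 1) →
      ∀ x, (((-η - η : ℝ)) : EReal) ≤ f₀ x + wsumE c (fun i => F i x) := by
    intro c hc hc1 x
    have h1 := hlbE x
    have h2 := wsumE_lb c (fun i => F i x) η hc hc1 (fun i => hlbFE i x)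
    calc (((-η - η : ℝ)) : EReal) = ((-η : ℝ) : EReal) + ((-η : ℝ) : EReal) := by
          rw [← EReal.coe_add]; congr 1
    _ ≤ f₀ x + wsumE c (fun i => F i x) := add_le_add h1 h2
  have hδ0_bot : δ 0 ≠ ⊥ := by
    rw [h0]
    intro hb
    have := le_iInf (hterm_lb p hpnn hp1)
    rw [hb, le_bot_iff] at this
    exact (EReal.coe_ne_bot _) this
  -- upper bound: value at xb is finite
  have hwxb : wsumE p (fun i => F i xb) = ((∑ i, p i * (F i xb).toReal : ℝ) : EReal) := by
    unfold wsumE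
    rw [if_neg]
    push_neg
    intro i _
    exact hfinb.2 i
  have hδ0_top : δ 0 ≠ ⊤ := by
    rw [h0]
    intro ht
    have hle : ⨅ x, f₀ x + wsumE p (fun i => F i xb) ≤ f₀ xb + wsumE p (fun i => F i xb) :=
      iInf_le _ xb
    have hle2 : (⊤ : EReal) ≤ f₀ xb + wsumE p (fun i => F i xb) := by
      rw [← ht]; exact iInf_le _ xb
    have : f₀ xb + wsumE p (fun i => F i xb) ≠ ⊤ := by
      rw [hwxb, ← EReal.coe_toReal hfinb.1 (hf₀bot xb), ← EReal.coe_add]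
      exact EReal.coe_ne_top _
    exact this (top_le_iff.mp hle2)
  refine ⟨⟨hδ0_top, hδ0_bot⟩, ?_⟩
  set d : ℝ := (δ 0).toReal with hd
  have hδ0d : δ 0 = ((d : ℝ) : EReal) := (EReal.coe_toReal hδ0_top hδ0_bot).symm
  set κ : ℝ := max η ((2 * d + 4 * η) / α) + η with hκ
  have hκη : η ≤ κ := by
    rw [hκ]; have h := le_max_left η ((2 * d + 4 * η) / α); linarith
  have hκ2 : (2 * d + 4 * η) / α ≤ κ := by
    rw [hκ]; have h := le_max_right η ((2 * d + 4 * η) / α); linarith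
  have hκ0 : 0 ≤ κ := le_trans hη hκη
  refine ⟨κ, hκ0, ?_⟩
  intro u hu
  set t : ℝ := ∑ i, |u i| with htdef
  have ht0 : 0 ≤ t := Finset.sum_nonneg fun i _ => abs_nonneg _
  have habs : ∀ i, |u i| ≤ t := by
    intro i
    exact Finset.single_le_sum (f := fun i => |u i|) (fun j _ => abs_nonneg _) (Finset.mem_univ i)
  rw [hδ u]
  split
  · next hfeas =>
    obtain ⟨hqnn, hq1⟩ := hfeas
    refine le_iInf fun x => ?_
    -- notation
    set q : Fin s → ℝ := fun i => p i + u i with hqdef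
    -- case: f₀ x = ⊤
    by_cases hf0x : f₀ x = ⊤
    · rw [hf0x, EReal.top_add_of_ne_bot (wsumE_ne_bot _ _)]; exact le_top
    by_cases hwq : ∃ i, q i ≠ 0 ∧ F i x = ⊤
    · have : wsumE q (fun i => F i x) = ⊤ := by unfold wsumE; rw [if_pos]; exact hwq
      rw [this, EReal.add_top_of_ne_bot (hf₀bot x)]; exact le_top
    -- now everything real
    push_neg at hwq
    have hFp : ∀ i, p i ≠ 0 → F i x ≠ ⊤ := by
      intro i hpi hFi
      have hqi : q i = 0 := by
        by_contra hqi; exact (hwq i hqi) hFi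
      have hui : u i = -p i := by simp [hqdef] at hqi; linarith
      have hpip : 0 < p i := lt_of_le_of_ne (hpnn i) (Ne.symm hpi)
      have : α ≤ |u i| := by rw [hui, abs_neg, abs_of_pos hpip]; exact hαle i hpip
      linarith [habs i, hu]
    have hwqe : wsumE q (fun i => F i x) = ((∑ i, q i * (F i x).toReal : ℝ) : EReal) := by
      unfold wsumE; rw [if_neg]; push_neg; exact hwq
    have hwpe : wsumE p (fun i => F i x) = ((∑ i, p i * (F i x).toReal : ℝ) : EReal) := by
      unfold wsumE; rw [if_neg]; push_neg; exact hFp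
    set a : Fin s → ℝ := fun i => (F i x).toReal with hadef
    set S : ℝ := ∑ i, p i * a i with hSdef
    set b : ℝ := (f₀ x).toReal with hbdef
    have hf0xe : f₀ x = ((b : ℝ) : EReal) := (EReal.coe_toReal hf0x (hf₀bot x)).symm
    -- a i ≥ -η
    have ha_lb : ∀ i, -η ≤ a i := by
      intro i
      by_cases hFi : F i x = ⊤
      · simp [hadef, hFi]; linarith
      · have := EReal.toReal_le_toReal (hlbFE i x) (by simp) hFi
        simpa [hadef] using this
    -- b ≥ -η
    have hb_lb : -η ≤ b := by
      have := EReal.toReal_le_toReal (hlbE x) (by simp) hf0x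
      simpa [hbdef] using this
    -- d ≤ b + S
    have hdbS : d ≤ b + S := by
      have h1 : δ 0 ≤ f₀ x + wsumE p (fun i => F i x) := h0 ▸ iInf_le _ x
      rw [hδ0d, hf0xe, hwpe, ← EReal.coe_add, EReal.coe_le_coe_iff] at h1
      exact h1
    -- p i * a i ≤ S + η
    have hpaS : ∀ i, p i * a i ≤ S + η := by
      intro i
      have hsplit : S = p i * a i + ∑ j ∈ Finset.univ.erase i, p j * a j := by
        rw [hSdef, ← Finset.add_sum_erase _ _ (Finset.mem_univ i)]
      have hrest : -η ≤ ∑ j ∈ Finset.univ.erase i, p j * a j := by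
        have h1 : ∀ j ∈ Finset.univ.erase i, p j * (-η) ≤ p j * a j :=
          fun j _ => mul_le_mul_of_nonneg_left (ha_lb j) (hpnn j)
        have h2 : ∑ j ∈ Finset.univ.erase i, p j ≤ 1 := by
          rw [← hp1]
          exact Finset.sum_le_sum_of_subset_of_nonneg (Finset.erase_subset _ _)
            (fun j _ _ => hpnn j)
        calc -η = 1 * (-η) := by ring
        _ ≤ (∑ j ∈ Finset.univ.erase i, p j) * (-η) := by
            apply mul_le_mul_of_nonpos_right h2; linarith
        _ = ∑ j ∈ Finset.univ.erase i, p j * (-η) := by rw [Finset.sum_mul]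
        _ ≤ _ := Finset.sum_le_sum h1
      linarith [hsplit]
    have hSlb : -η ≤ S := by
      have h1 : ∀ i ∈ Finset.univ, p i * (-η) ≤ p i * a i :=
        fun i _ => mul_le_mul_of_nonneg_left (ha_lb i) (hpnn i)
      calc -η = ∑ i, p i * (-η) := by rw [← Finset.sum_mul, hp1]; ring
      _ ≤ S := Finset.sum_le_sum h1
    -- M
    set M : ℝ := max η ((S + η) / α) with hMdef
    have hM0 : 0 ≤ M := le_trans hη (le_max_left _ _)
    have hterm : ∀ i, -(|u i| * M) ≤ u i * a i := by
      intro i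
      rcases lt_trichotomy (u i) 0 with hui | hui | hui
      · -- u i < 0
        have hpi : 0 < p i := by have := hqnn i; simp [hqdef] at this ⊢; linarith
        have hpα : α ≤ p i := hαle i hpi
        by_cases hai : a i ≤ 0
        · have h1 : 0 ≤ u i * a i := by nlinarith
          have h2 : -(|u i| * M) ≤ 0 := neg_nonpos_of_nonneg (mul_nonneg (abs_nonneg _) hM0)
          linarith
        · push_neg at hai
          have haiub : a i ≤ (S + η) / α := by
            rw [le_div_iff₀ hαpos]
            calc a i * α ≤ a i * p i := by
                  apply mul_le_mul_of_nonneg_left hpα (le_of_lt hai)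
            _ = p i * a i := by ring
            _ ≤ S + η := hpaS i
          have hMa : a i ≤ M := le_trans haiub (le_max_right _ _)
          have : u i * a i = -(|u i| * a i) := by
            rw [abs_of_neg hui]; ring
          rw [this]
          exact neg_le_neg (mul_le_mul_of_nonneg_left hMa (abs_nonneg _))
      · simp [hui, mul_nonneg (abs_nonneg (u i)) hM0]
      · -- u i > 0
        have : -(u i * η) ≤ u i * a i := by
          have := mul_le_mul_of_nonneg_left (ha_lb i) (le_of_lt hui)
          linarith
        have h2 : |u i| * η ≤ |u i| * M :=
          mul_le_mul_of_nonneg_left (le_max_left _ _) (abs_nonneg _)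
        rw [abs_of_pos hui] at h2 ⊢
        linarith
    have hsum_lb : -(t * M) ≤ ∑ i, u i * a i := by
      calc -(t * M) = ∑ i, -(|u i| * M) := by
            rw [htdef, Finset.sum_mul, Finset.sum_neg_distrib]
      _ ≤ ∑ i, u i * a i := Finset.sum_le_sum fun i _ => hterm i
    have hqS : ∑ i, q i * a i = S + ∑ i, u i * a i := by
      rw [hSdef, ← Finset.sum_add_distrib]
      exact Finset.sum_congr rfl fun i _ => by simp [hqdef]; ring
    -- final real inequality
    have hfinal : d - κ * t ≤ b + ∑ i, q i * a i := by
      rw [hqS]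
      by_cases hcase : (S + η) / α ≤ κ
      · have hMκ : M ≤ κ := max_le hκη hcase
        have : t * M ≤ t * κ := mul_le_mul_of_nonneg_left hMκ ht0
        nlinarith [hsum_lb, hdbS]
      · push_neg at hcase
        have hS_big : 2 * d + 4 * η < S + η := by
          have := (div_lt_div_iff₀ hαpos hαpos).mp (lt_of_le_of_lt hκ2 hcase)
          nlinarith [hcase, hκ2, (div_le_iff₀ hαpos).mp hκ2]
        have hMeq : M = (S + η) / α := max_eq_right (le_trans hκη (le_of_lt hcase))
        have htM : t * M ≤ (S + η) / 2 := by
          rw [hMeq]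
          calc t * ((S + η) / α) ≤ (α / 2) * ((S + η) / α) := by
                apply mul_le_mul_of_nonneg_right hu
                apply div_nonneg (by linarith) (le_of_lt hαpos)
          _ = (S + η) / 2 := by field_simp
        have hκt : 0 ≤ κ * t := mul_nonneg hκ0 ht0
        nlinarith [hsum_lb, hb_lb]
    -- back to EReal
    calc δ 0 - ((κ * t : ℝ) : EReal) = (((d - κ * t : ℝ)) : EReal) := by
          rw [hδ0d, ← EReal.coe_sub]
    _ ≤ (((b + ∑ i, q i * a i : ℝ)) : EReal) := EReal.coe_le_coe_iff.mpr hfinal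
    _ = f₀ x + wsumE q (fun i => F i x) := by rw [hf0xe, hwqe, ← EReal.coe_add]
  · exact le_top
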